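/- Let n ≥ 2, 1 ≤ k ≤ n−1, s > 0, p a prime, and A ⊆ F_p^n. Suppose there exists an affine hyperplane H = x₀ + H₀ (where H₀ ∈ G(n−1, F_p^n) and x₀ ∈ F_p^n) with #(A ∩ H) ≥ p^{s+n−k−1}. Then every V ∈ E_s(A) satisfies V ⊆ H₀; consequently #E_s(A) ≤ #G(n−k, H₀) ≤ C(n,k) · p^{(k−1)(n−k)} for a constant C(n,k) independent of p. -/

import Mathlib

/-!
If `V ∈ E_s(A)` were not contained in the hyperplane `H₀`, then `V ⊓ H₀` would have dimension
`n - k - 1`, and two points of `A ∩ (x₀ + H₀)` with the same image in `𝔽_p^n / V` differ by an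
element of `V ⊓ H₀`. Hence `p^{s+n-k-1} ≤ #(A ∩ H) ≤ p^{n-k-1} · #π_V(A) < p^{n-k-1} · p^s`.

The subspaces of dimension `m` in a `d`-dimensional space over `𝔽_q` are counted through their
bases: the `∏ (q^d - q^i) ≤ q^{dm}` linearly independent `m`-tuples split into classes of
`∏ (q^m - q^i) ≥ q^{m²} / 2^m` tuples with the same span, so there are at most `2^m q^{m(d-m)}`
of them.
-/

/-- `excSet p n k s A` is the exceptional set
`E_s(A) = {V ∈ G(n-k, 𝔽_p^n) : #π_V(A) < p^s}`, where `π_V` is the quotient map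
`𝔽_p^n → 𝔽_p^n/V` (so `#π_V(A)` counts the cosets `x + V`, `x ∈ A`). -/
def excSet (p n k : ℕ) (s : ℝ) (A : Set (Fin n → ZMod p)) :
    Set (Submodule (ZMod p) (Fin n → ZMod p)) :=
  {V | Module.finrank (ZMod p) V = n - k ∧ (((⇑V.mkQ '' A).ncard : ℝ) < (p : ℝ) ^ s)}

open Module Submodule Set

theorem ncard_inter_coset_le_card_inf_mul {R M : Type*} [Ring R] [AddCommGroup M] [Module R M]
    [Finite M] (V W : Submodule R M) (A : Set M) (x₀ : M) :
    (A ∩ (x₀ + ·) '' W).ncard ≤ Nat.card (V ⊓ W : Submodule R M) * (V.mkQ '' A).ncard := by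
  set B := A ∩ (x₀ + ·) '' W
  -- a point of `B` is determined by its coset and its offset from a chosen point of `B` in it
  set r := Function.invFunOn V.mkQ B
  have hr : ∀ z ∈ B, r (V.mkQ z) ∈ B ∧ V.mkQ (r (V.mkQ z)) = V.mkQ z := fun z hz =>
    ⟨Function.invFunOn_mem ⟨z, hz, rfl⟩, Function.invFunOn_eq ⟨z, hz, rfl⟩⟩
  have hmaps : ∀ z ∈ B, (V.mkQ z, z - r (V.mkQ z)) ∈ (V.mkQ '' A) ×ˢ (V ⊓ W : Set M) := by
    rintro z ⟨hzA, a, ha, rfl⟩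
    obtain ⟨⟨-, b, hb, hrb⟩, hrz⟩ := hr _ ⟨hzA, a, ha, rfl⟩
    refine ⟨⟨_, hzA, rfl⟩, (Submodule.Quotient.eq V).1 hrz.symm, ?_⟩
    simp only [SetLike.mem_coe, ← hrb, add_sub_add_left_eq_sub]
    exact sub_mem ha hb
  have hinj : InjOn (fun z => (V.mkQ z, z - r (V.mkQ z))) B := by
    intro z _ z' _ h
    simp only [Prod.mk.injEq] at h
    rw [h.1] at h
    simpa using h.2
  calc B.ncard ≤ ((V.mkQ '' A) ×ˢ (V ⊓ W : Set M)).ncard :=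
        ncard_le_ncard_of_injOn _ hmaps hinj (toFinite _)
    _ = _ := by rw [ncard_prod, mul_comm, ← Nat.card_coe_set_eq]; rfl

theorem Submodule.finrank_inf_add_one_of_not_le {K E : Type*} [DivisionRing K] [AddCommGroup E]
    [Module K E] [FiniteDimensional K E] {H V : Submodule K E}
    (hH : finrank K H + 1 = finrank K E) (hV : ¬V ≤ H) :
    finrank K (V ⊓ H : Submodule K E) + 1 = finrank K V := by
  have hlt : finrank K H < finrank K (V ⊔ H : Submodule K E) :=
    finrank_lt_finrank_of_lt (lt_of_le_of_ne le_sup_right fun h => hV (h ▸ le_sup_left))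
  have hle := (V ⊔ H).finrank_le
  have := finrank_sup_add_finrank_inf_eq V H
  omega

theorem Submodule.ncard_setOf_finrank_eq_and_le {R M : Type*} [Ring R] [AddCommGroup M]
    [Module R M] (H : Submodule R M) (m : ℕ) :
    {V : Submodule R M | finrank R V = m ∧ V ≤ H}.ncard =
      Nat.card {W : Submodule R H // finrank R W = m} := by
  rw [← Nat.card_coe_set_eq]
  refine Nat.card_congr (Equiv.symm ?_)
  refine ((MapSubtype.orderIso H).toEquiv.subtypeEquiv
    (p := fun W : Submodule R H => finrank R W = m)
    (q := fun V : {V : Submodule R M // V ≤ H} => finrank R V.1 = m) fun W => ?_).trans ?_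
  · rw [← finrank_map_subtype_eq H W]; rfl
  · exact (Equiv.subtypeSubtypeEquivSubtypeInter (fun V => V ≤ H) fun V => finrank R V = m).trans
      (Equiv.subtypeEquivRight fun V => and_comm)

section Grassmannian

variable {K E : Type*} [DivisionRing K] [Fintype K] [AddCommGroup E] [Module K E] [Finite E]

local notation "q" => Fintype.card K

theorem LinearIndependent.span_eq_of_finrank_eq {m : ℕ} {V : Submodule K E} (hV : finrank K V = m)
    {t : Fin m → V} (ht : LinearIndependent K t) : span K (range (V.subtype ∘ t)) = V := by
  refine eq_of_le_of_finrank_eq (span_le.2 ?_) ?_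
  · rintro _ ⟨i, rfl⟩
    simp
  · rw [finrank_span_eq_card (ht.map' V.subtype V.ker_subtype), Fintype.card_fin, hV]

theorem card_linearIndependent_span_eq {m : ℕ} (V : Submodule K E) (hV : finrank K V = m) :
    Nat.card {s : Fin m → E // LinearIndependent K s ∧ span K (range s) = V} =
      ∏ i : Fin m, (q ^ m - q ^ i.val) := by
  rw [← hV, ← card_linearIndependent le_rfl, hV]
  exact Nat.card_congr
    { toFun s := ⟨fun i => ⟨s.1 i, s.2.2.le (subset_span (mem_range_self i))⟩,
        .of_comp V.subtype s.2.1⟩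
      invFun t :=
        ⟨V.subtype ∘ t.1, t.2.map' V.subtype V.ker_subtype, t.2.span_eq_of_finrank_eq hV⟩
      left_inv _ := rfl
      right_inv _ := rfl }

theorem card_linearIndependent_eq_card_finrank_eq_mul (m : ℕ) :
    Nat.card {s : Fin m → E // LinearIndependent K s} =
      Nat.card {V : Submodule K E // finrank K V = m} * ∏ i : Fin m, (q ^ m - q ^ i.val) := by
  have := Fintype.ofFinite {V : Submodule K E // finrank K V = m}
  let span' (s : {s : Fin m → E // LinearIndependent K s}) :
      {V : Submodule K E // finrank K V = m} :=
    ⟨span K (range s.1), (finrank_span_eq_card s.2).trans (Fintype.card_fin m)⟩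
  calc Nat.card {s : Fin m → E // LinearIndependent K s}
      = Nat.card (Σ V, {s // span' s = V}) := (Nat.card_congr (Equiv.sigmaFiberEquiv span')).symm
    _ = ∑ V, Nat.card {s // span' s = V} := Nat.card_sigma
    _ = ∑ V : {V : Submodule K E // finrank K V = m}, ∏ i : Fin m, (q ^ m - q ^ i.val) := by
      refine Finset.sum_congr rfl fun V _ => ?_
      rw [← card_linearIndependent_span_eq V.1 V.2]
      exact Nat.card_congr ((Equiv.subtypeEquivRight fun s => Subtype.ext_iff).trans
        (Equiv.subtypeSubtypeEquivSubtypeInter (fun s : Fin m → E => LinearIndependent K s)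
          fun s => span K (range s) = V.1))
    _ = _ := by rw [Finset.sum_const, Finset.card_univ, smul_eq_mul, Nat.card_eq_fintype_card]

theorem card_submodule_finrank_eq_le (m : ℕ) :
    Nat.card {V : Submodule K E // finrank K V = m} ≤ 2 ^ m * q ^ (m * (finrank K E - m)) := by
  set d := finrank K E
  rcases lt_or_ge d m with hdm | hmd
  · have : IsEmpty {V : Submodule K E // finrank K V = m} :=
      ⟨fun V => absurd (V.2 ▸ V.1.finrank_le) (not_le.2 hdm)⟩
    simp
  have hq : 2 ≤ q := Fintype.one_lt_card
  have hcount := card_linearIndependent_eq_card_finrank_eq_mul (K := K) (E := E) m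
  rw [card_linearIndependent hmd] at hcount
  have hlower : q ^ (m * m) ≤ 2 ^ m * ∏ i : Fin m, (q ^ m - q ^ i.val) := by
    rw [pow_mul', ← Fin.prod_const m (q ^ m), ← Fin.prod_const m 2, ← Finset.prod_mul_distrib]
    refine Finset.prod_le_prod' fun i _ => ?_
    have h1 : q ^ (i.val + 1) ≤ q ^ m := Nat.pow_le_pow_right (by omega) i.2
    have h2 : 2 * q ^ i.val ≤ q ^ (i.val + 1) := by
      rw [pow_succ']; exact Nat.mul_le_mul_right _ hq
    omega
  have hupper : ∏ i : Fin m, (q ^ d - q ^ i.val) ≤ q ^ (m * d) := by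
    rw [pow_mul', ← Fin.prod_const m (q ^ d)]
    exact Finset.prod_le_prod' fun i _ => Nat.sub_le _ _
  have hexp : m * d = m * (d - m) + m * m := by
    rw [← Nat.mul_add, Nat.sub_add_cancel hmd]
  refine Nat.le_of_mul_le_mul_right ?_ (pow_pos (by omega : 0 < q) (m * m))
  calc Nat.card {V : Submodule K E // finrank K V = m} * q ^ (m * m)
      ≤ 2 ^ m * (Nat.card {V : Submodule K E // finrank K V = m} *
          ∏ i : Fin m, (q ^ m - q ^ i.val)) := by
        rw [mul_left_comm]; exact Nat.mul_le_mul_left _ hlower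
    _ ≤ 2 ^ m * q ^ (m * d) := by rw [← hcount]; exact Nat.mul_le_mul_left _ hupper
    _ = 2 ^ m * q ^ (m * (d - m)) * q ^ (m * m) := by rw [hexp, pow_add, mul_assoc]

end Grassmannian

theorem le_of_mem_excSet {p n k : ℕ} [Fact p.Prime] {s : ℝ} {A : Set (Fin n → ZMod p)}
    {H₀ : Submodule (ZMod p) (Fin n → ZMod p)} (hH₀ : finrank (ZMod p) H₀ = n - 1)
    {x₀ : Fin n → ZMod p}
    (hA : (p : ℝ) ^ (s + n - k - 1) ≤
      (A ∩ (x₀ + ·) '' (H₀ : Set (Fin n → ZMod p))).ncard)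
    {V : Submodule (ZMod p) (Fin n → ZMod p)} (hV : V ∈ excSet p n k s A) : V ≤ H₀ := by
  by_contra hVH
  obtain ⟨hVdim, hVsmall⟩ := hV
  have hH : finrank (ZMod p) H₀ + 1 = finrank (ZMod p) (Fin n → ZMod p) := by
    have := finrank_lt (s := H₀) fun h => hVH (h ▸ le_top)
    rw [finrank_fin_fun] at this ⊢
    omega
  have hinf := finrank_inf_add_one_of_not_le hH hVH
  have hcard : Nat.card (V ⊓ H₀ : Submodule (ZMod p) (Fin n → ZMod p)) = p ^ (n - k - 1) := by
    rw [natCard_eq_pow_finrank (K := ZMod p), Nat.card_zmod]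
    congr 1
    omega
  have hexp : s + n - k - 1 = s + ((n - k - 1 : ℕ) : ℝ) := by
    rw [Nat.cast_sub (by omega), Nat.cast_sub (by omega)]
    ring
  have hp : (0 : ℝ) < p := by exact_mod_cast (Fact.out : p.Prime).pos
  have hfiber := ncard_inter_coset_le_card_inf_mul V H₀ A x₀
  rw [hcard] at hfiber
  refine lt_irrefl ((p : ℝ) ^ (s + n - k - 1)) ?_
  calc (p : ℝ) ^ (s + n - k - 1)
        ≤ (A ∩ (x₀ + ·) '' (H₀ : Set (Fin n → ZMod p))).ncard := hA
    _ ≤ (p : ℝ) ^ (n - k - 1) * (V.mkQ '' A).ncard := by exact_mod_cast hfiber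
    _ < (p : ℝ) ^ (n - k - 1) * (p : ℝ) ^ s := mul_lt_mul_of_pos_left hVsmall (by positivity)
    _ = (p : ℝ) ^ (s + n - k - 1) := by rw [hexp, Real.rpow_add hp, Real.rpow_natCast, mul_comm]

theorem stmt_8_general (n k : ℕ)
    (s : ℝ) :
    ∃ C : ℝ, ∀ p : ℕ, p.Prime → ∀ A : Set (Fin n → ZMod p),
      ∀ H₀ : Submodule (ZMod p) (Fin n → ZMod p),
        Module.finrank (ZMod p) H₀ = n - 1 →
      ∀ x₀ : Fin n → ZMod p,
        (p : ℝ) ^ (s + (n : ℝ) - k - 1) ≤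
            ((A ∩ ((x₀ + ·) '' (H₀ : Set (Fin n → ZMod p)))).ncard : ℝ) →
        (∀ V ∈ excSet p n k s A, V ≤ H₀) ∧
        ((excSet p n k s A).ncard : ℝ) ≤
          ({V : Submodule (ZMod p) (Fin n → ZMod p) |
              Module.finrank (ZMod p) V = n - k ∧ V ≤ H₀}.ncard : ℝ) ∧
        ({V : Submodule (ZMod p) (Fin n → ZMod p) |
            Module.finrank (ZMod p) V = n - k ∧ V ≤ H₀}.ncard : ℝ) ≤
          C * (p : ℝ) ^ ((k - 1) * (n - k)) := by
  refine ⟨2 ^ (n - k), fun p hp A H₀ hH₀ x₀ hA => ?_⟩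
  have : Fact p.Prime := ⟨hp⟩
  have hle : ∀ V ∈ excSet p n k s A, V ≤ H₀ := fun V hV => le_of_mem_excSet hH₀ hA hV
  have hexp : (n - k) * (finrank (ZMod p) H₀ - (n - k)) = (k - 1) * (n - k) := by
    rw [hH₀, mul_comm]
    rcases le_or_gt n k with h | h
    · simp [Nat.sub_eq_zero_of_le h]
    · congr 1; omega
  refine ⟨hle, ?_, ?_⟩
  · have hsub : excSet p n k s A ⊆ {V | finrank (ZMod p) V = n - k ∧ V ≤ H₀} :=
      fun V hV => ⟨hV.1, hle V hV⟩
    exact_mod_cast ncard_le_ncard hsub (toFinite _)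
  · have hcount := card_submodule_finrank_eq_le (K := ZMod p) (E := H₀) (n - k)
    rw [← ncard_setOf_finrank_eq_and_le, ZMod.card, hexp] at hcount
    exact_mod_cast hcount

/-- If some affine hyperplane `H = x₀ + H₀` satisfies
`#(A ∩ H) ≥ p^{s+n-k-1}`, then every `V ∈ E_s(A)` is contained in `H₀`;
consequently `#E_s(A) ≤ #G(n-k, H₀) ≤ C(n,k) · p^{(k-1)(n-k)}` with `C(n,k)`
independent of `p`. -/
theorem stmt_8 (n k : ℕ) (hn : 2 ≤ n) (hk1 : 1 ≤ k) (hkn : k ≤ n - 1)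
    (s : ℝ) (hs : 0 < s) :
    ∃ C : ℝ, ∀ p : ℕ, p.Prime → ∀ A : Set (Fin n → ZMod p),
      ∀ H₀ : Submodule (ZMod p) (Fin n → ZMod p),
        Module.finrank (ZMod p) H₀ = n - 1 →
      ∀ x₀ : Fin n → ZMod p,
        (p : ℝ) ^ (s + (n : ℝ) - k - 1) ≤
            ((A ∩ ((x₀ + ·) '' (H₀ : Set (Fin n → ZMod p)))).ncard : ℝ) →
        (∀ V ∈ excSet p n k s A, V ≤ H₀) ∧
        ((excSet p n k s A).ncard : ℝ) ≤
          ({V : Submodule (ZMod p) (Fin n → ZMod p) |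
              Module.finrank (ZMod p) V = n - k ∧ V ≤ H₀}.ncard : ℝ) ∧
        ({V : Submodule (ZMod p) (Fin n → ZMod p) |
            Module.finrank (ZMod p) V = n - k ∧ V ≤ H₀}.ncard : ℝ) ≤
          C * (p : ℝ) ^ ((k - 1) * (n - k)) :=
  stmt_8_general n k s
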